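/- (Corollary 1, part b) Under Assumptions 1 and 2, let the GTT stepsize satisfy 0 < γ < 2/L, define ρ := max{|1−γm|, |1−γL|} and σ := 1 + h·(C₀C₁/m² + C₂/m), and suppose ρ^τ·σ < 1. Then the GTT iterates satisfy limsup_{k→∞} ‖x_k − x*(t_k)‖ ≤ (ρ^τ·h² / (2·(1 − ρ^τσ)))·(C₀²C₁/m³ + 2C₀C₂/m² + C₃/m), i.e. an asymptotic tracking error of order O(h²). -/

import Mathlib

noncomputable section

/-- The setting of a time-varying, smooth, strongly convex optimization problem
`min_{x ∈ ℝⁿ} f(x;t)`, bundling the objective `f`, its derivatives, the Hessian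
inverse, the optimal trajectory `x*(t)`, and Assumptions 1 and 2 of the paper. -/
structure TVOpt (n : ℕ) where
  /-- the objective `f(x;t)` -/
  f : EuclideanSpace ℝ (Fin n) → ℝ → ℝ
  /-- the gradient `∇ₓ f(x;t)` -/
  grad : EuclideanSpace ℝ (Fin n) → ℝ → EuclideanSpace ℝ (Fin n)
  /-- the Hessian `∇ₓₓ f(x;t)` -/
  hess : EuclideanSpace ℝ (Fin n) → ℝ →
    EuclideanSpace ℝ (Fin n) →L[ℝ] EuclideanSpace ℝ (Fin n)
  /-- the Hessian inverse `[∇ₓₓ f(x;t)]⁻¹` -/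
  hessInv : EuclideanSpace ℝ (Fin n) → ℝ →
    EuclideanSpace ℝ (Fin n) →L[ℝ] EuclideanSpace ℝ (Fin n)
  /-- the mixed partial derivative `∇_{tx} f(x;t)` -/
  dtgrad : EuclideanSpace ℝ (Fin n) → ℝ → EuclideanSpace ℝ (Fin n)
  /-- the third derivative tensor `∇ₓₓₓ f(x;t)` -/
  d3 : EuclideanSpace ℝ (Fin n) → ℝ →
    EuclideanSpace ℝ (Fin n) →L[ℝ] EuclideanSpace ℝ (Fin n) →L[ℝ] EuclideanSpace ℝ (Fin n)
  /-- the time derivative of the Hessian `∇_{xtx} f(x;t)` -/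
  dthess : EuclideanSpace ℝ (Fin n) → ℝ →
    EuclideanSpace ℝ (Fin n) →L[ℝ] EuclideanSpace ℝ (Fin n)
  /-- the second time derivative of the gradient `∇_{ttx} f(x;t)` -/
  dttgrad : EuclideanSpace ℝ (Fin n) → ℝ → EuclideanSpace ℝ (Fin n)
  /-- the optimal trajectory `x*(t)` -/
  xstar : ℝ → EuclideanSpace ℝ (Fin n)
  /-- strong convexity constant -/
  m : ℝ
  /-- Hessian norm bound (gradient Lipschitz constant) -/
  L : ℝ
  C0 : ℝ
  C1 : ℝ
  C2 : ℝ
  C3 : ℝ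
  m_pos : 0 < m
  grad_spec : ∀ (x : EuclideanSpace ℝ (Fin n)) (t : ℝ), HasGradientAt (fun y => f y t) (grad x t) x
  hess_spec : ∀ (x : EuclideanSpace ℝ (Fin n)) (t : ℝ), HasFDerivAt (fun y => grad y t) (hess x t) x
  dtgrad_spec : ∀ (x : EuclideanSpace ℝ (Fin n)) (t : ℝ), HasDerivAt (fun s => grad x s) (dtgrad x t) t
  d3_spec : ∀ (x : EuclideanSpace ℝ (Fin n)) (t : ℝ), HasFDerivAt (fun y => hess y t) (d3 x t) x
  dthess_spec : ∀ (x : EuclideanSpace ℝ (Fin n)) (t : ℝ), HasDerivAt (fun s => hess x s) (dthess x t) t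
  dttgrad_spec : ∀ (x : EuclideanSpace ℝ (Fin n)) (t : ℝ), HasDerivAt (fun s => dtgrad x s) (dttgrad x t) t
  /-- Assumption 1: `∇ₓₓ f(x;t) ⪰ m·I` uniformly in `x` and `t`. -/
  strong_convex : ∀ (x : EuclideanSpace ℝ (Fin n)) (t : ℝ) (v : EuclideanSpace ℝ (Fin n)),
    m * ‖v‖ ^ 2 ≤ @inner ℝ _ _ v (hess x t v)
  hessInv_left : ∀ (x : EuclideanSpace ℝ (Fin n)) (t : ℝ), ContinuousLinearMap.comp (hessInv x t) (hess x t) =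
    ContinuousLinearMap.id ℝ (EuclideanSpace ℝ (Fin n))
  hessInv_right : ∀ (x : EuclideanSpace ℝ (Fin n)) (t : ℝ), ContinuousLinearMap.comp (hess x t) (hessInv x t) =
    ContinuousLinearMap.id ℝ (EuclideanSpace ℝ (Fin n))
  /-- Assumption 2: bounded derivatives, uniformly in `x` and `t`. -/
  hess_bound : ∀ (x : EuclideanSpace ℝ (Fin n)) (t : ℝ), ‖hess x t‖ ≤ L
  dtgrad_bound : ∀ (x : EuclideanSpace ℝ (Fin n)) (t : ℝ), ‖dtgrad x t‖ ≤ C0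
  d3_bound : ∀ (x : EuclideanSpace ℝ (Fin n)) (t : ℝ), ‖d3 x t‖ ≤ C1
  dthess_bound : ∀ (x : EuclideanSpace ℝ (Fin n)) (t : ℝ), ‖dthess x t‖ ≤ C2
  dttgrad_bound : ∀ (x : EuclideanSpace ℝ (Fin n)) (t : ℝ), ‖dttgrad x t‖ ≤ C3
  /-- `x*(t)` minimizes `f(·;t)` -/
  xstar_min : ∀ t : ℝ, IsMinOn (fun x => f x t) Set.univ (xstar t)
  /-- equivalently, `∇ₓ f(x*(t);t) = 0` -/
  xstar_grad : ∀ t : ℝ, grad (xstar t) t = 0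

/-!
Write `e_k = ‖x_k - x*(t_k)‖`. The correction map `y ↦ y - γ ∇ₓ f(y;t)` has derivative
`I - γ ∇ₓₓ f`, of norm at most `ρ` since the Hessian is symmetric with quadratic form between `m`
and `L`; it fixes `x*(t)`, so the `τ` corrections contract the distance to `x*(t_{k+1})` by `ρ^τ`.
The prediction map is `σ`-Lipschitz, and applied to `x*(t_k)` it is a Newton step for the
first-order expansion of `∇ₓ f` in time, so it lands where the gradient is `O(h²)`, hence, by
strong convexity, within `h²/2 · (C₀²C₁/m³ + 2C₀C₂/m² + C₃/m)` of `x*(t_{k+1})`. Thus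
`e_{k+1} ≤ ρ^τ σ e_k + ρ^τ h²/2 · (C₀²C₁/m³ + 2C₀C₂/m² + C₃/m)`, and this contracting linear
recursion bounds the `limsup`.
-/

open Filter Set Topology
open scoped RealInnerProductSpace

section Calculus

variable {E F : Type*} [NormedAddCommGroup E] [NormedSpace ℝ E]
  [NormedAddCommGroup F] [NormedSpace ℝ F]

theorem norm_sub_le_of_forall_hasFDerivAt {f : E → F} {f' : E → E →L[ℝ] F}
    (hf : ∀ z, HasFDerivAt f (f' z) z) {C : ℝ} (hC : ∀ z, ‖f' z‖ ≤ C) (x y : E) :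
    ‖f y - f x‖ ≤ C * ‖y - x‖ :=
  convex_univ.norm_image_sub_le_of_norm_hasFDerivWithin_le
    (fun z _ => (hf z).hasFDerivWithinAt) (fun z _ => hC z) trivial trivial

theorem norm_sub_le_of_forall_hasDerivAt {f f' : ℝ → F} (hf : ∀ s, HasDerivAt f (f' s) s)
    {C : ℝ} (hC : ∀ s, ‖f' s‖ ≤ C) (s t : ℝ) : ‖f s - f t‖ ≤ C * |s - t| :=
  convex_univ.norm_image_sub_le_of_norm_hasDerivWithin_le
    (fun z _ => (hf z).hasDerivWithinAt) (fun z _ => hC z) trivial trivial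

theorem norm_sub_sub_smul_deriv_le {f f' : ℝ → F} (hf : ∀ s, HasDerivAt f (f' s) s)
    {C a b : ℝ} (hab : a ≤ b) (hC : ∀ s ∈ Icc a b, ‖f' s - f' a‖ ≤ C * (s - a)) :
    ‖f b - f a - (b - a) • f' a‖ ≤ C * (b - a) ^ 2 / 2 := by
  have hg : ∀ s, HasDerivAt (fun s => f s - f a - (s - a) • f' a) (f' s - f' a) s := fun s =>
    ((hf s).sub_const (f a)).sub
      ((((hasDerivAt_id s).sub_const a).smul_const (f' a)).congr_deriv (one_smul ℝ _))
  have hB : ∀ s, HasDerivAt (fun s => C * (s - a) ^ 2 / 2) (C * (s - a)) s := fun s =>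
    ((((hasDerivAt_id s).sub_const a).pow 2).const_mul C).div_const 2 |>.congr_deriv
      (by simp only [id, Nat.cast_ofNat]; ring)
  refine image_norm_le_of_norm_deriv_right_le_deriv_boundary
    (fun s _ => (hg s).continuousAt.continuousWithinAt) (fun s _ => (hg s).hasDerivWithinAt)
    (by simp) hB (fun s hs => hC s (Ico_subset_Icc_self hs)) ⟨hab, le_rfl⟩

end Calculus

section InnerProduct

variable {E : Type*} [NormedAddCommGroup E] [InnerProductSpace ℝ E]

theorem mul_norm_le_norm_of_mul_sq_le_inner {m : ℝ} {u w : E} (h : m * ‖u‖ ^ 2 ≤ ⟪u, w⟫) :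
    m * ‖u‖ ≤ ‖w‖ := by
  rcases (norm_nonneg u).eq_or_lt with hu | hu
  · rw [← hu, mul_zero]
    exact norm_nonneg w
  · refine le_of_mul_le_mul_left ?_ hu
    calc ‖u‖ * (m * ‖u‖) = m * ‖u‖ ^ 2 := by ring
      _ ≤ ‖u‖ * ‖w‖ := h.trans (real_inner_le_norm u w)

theorem mul_norm_sub_le_norm_sub_of_hasFDerivAt {F : E → E} {F' : E → E →L[ℝ] E}
    (hF : ∀ z, HasFDerivAt F (F' z) z) {m : ℝ} (hm : ∀ z v, m * ‖v‖ ^ 2 ≤ ⟪v, F' z v⟫)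
    (x y : E) : m * ‖y - x‖ ≤ ‖F y - F x‖ := by
  set u := y - x
  have hline : ∀ s : ℝ, HasDerivAt (fun s : ℝ => x + s • u) u s := fun s => by
    simpa using ((hasDerivAt_id s).smul_const u).const_add x
  let χ : ℝ → ℝ := fun s => ⟪u, F (x + s • u)⟫ - s * (m * ‖u‖ ^ 2)
  have hχ : ∀ s, HasDerivAt χ (⟪u, F' (x + s • u) u⟫ - m * ‖u‖ ^ 2) s := fun s => by
    have hFs := (hF (x + s • u)).comp_hasDerivAt s (hline s)
    exact (((hasDerivAt_const s u).inner ℝ hFs).sub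
      ((hasDerivAt_id s).mul_const (m * ‖u‖ ^ 2))).congr_deriv (by simp)
  have hmono : Monotone χ := monotone_of_deriv_nonneg (fun s => (hχ s).differentiableAt)
    fun s => by rw [(hχ s).deriv]; linarith [hm (x + s • u) u]
  have h01 : χ 0 ≤ χ 1 := hmono zero_le_one
  have hxu : x + u = y := add_sub_cancel x y
  simp only [χ, zero_smul, add_zero, zero_mul, sub_zero, one_smul, one_mul, hxu] at h01
  exact mul_norm_le_norm_of_mul_sq_le_inner (by rw [inner_sub_right]; linarith)

/-- The norm of the symmetric operator `I - γ H` is the supremum of its Rayleigh quotients, which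
lie between `1 - γ L` and `1 - γ m`. -/
theorem norm_id_sub_smul_le {H : E →L[ℝ] E} (hH : (H : E →ₗ[ℝ] E).IsSymmetric) {m L : ℝ}
    (hm : ∀ v, m * ‖v‖ ^ 2 ≤ ⟪v, H v⟫) (hL : ‖H‖ ≤ L) (γ : ℝ) :
    ‖ContinuousLinearMap.id ℝ E - γ • H‖ ≤ max |1 - γ * m| |1 - γ * L| := by
  have hsymm : ((ContinuousLinearMap.id ℝ E - γ • H : E →L[ℝ] E) : E →ₗ[ℝ] E).IsSymmetric :=
    by
      rw [ContinuousLinearMap.toLinearMap_sub, ContinuousLinearMap.toLinearMap_smul,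
        ContinuousLinearMap.coe_id]
      exact LinearMap.IsSymmetric.id.sub (hH.smul (by simp))
  rw [ContinuousLinearMap.norm_eq_iSup_rayleighQuotient _ hsymm]
  refine ciSup_le fun v => ?_
  rcases eq_or_ne v 0 with rfl | hv
  · simp
  have hv2 : 0 < ‖v‖ ^ 2 := by positivity
  set q := ⟪v, H v⟫ / ‖v‖ ^ 2
  have hmq : m ≤ q := (le_div_iff₀ hv2).2 (hm v)
  have hqL : q ≤ L := (div_le_iff₀ hv2).2 <| calc
    ⟪v, H v⟫ ≤ ‖v‖ * ‖H v‖ := real_inner_le_norm _ _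
    _ ≤ ‖v‖ * (L * ‖v‖) := by gcongr; exact H.le_of_opNorm_le hL v
    _ = L * ‖v‖ ^ 2 := by ring
  have hquot : (ContinuousLinearMap.id ℝ E - γ • H).rayleighQuotient v = 1 - γ * q := by
    simp only [ContinuousLinearMap.rayleighQuotient, ContinuousLinearMap.reApplyInnerSelf_apply,
      FunLike.coe_sub, FunLike.coe_smul, Pi.sub_apply, Pi.smul_apply,
      ContinuousLinearMap.coe_id', id, inner_sub_left, real_inner_smul_left,
      real_inner_self_eq_norm_sq, RCLike.re_to_real, q, real_inner_comm (H v) v]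
    field_simp
  rw [hquot]
  rcases le_total 0 γ with hγ | hγ
  · exact abs_le_max_abs_abs (by nlinarith) (by nlinarith) |>.trans (max_comm _ _).le
  · exact abs_le_max_abs_abs (by nlinarith) (by nlinarith)

end InnerProduct

theorem norm_iterate_sub_le_of_isFixedPt {E : Type*} [NormedAddCommGroup E] {T : E → E} {ρ : ℝ}
    (hρ : 0 ≤ ρ) (hT : ∀ x y, ‖T x - T y‖ ≤ ρ * ‖x - y‖) {p : E} (hp : T p = p) (k : ℕ) (z : E) :
    ‖T^[k] z - p‖ ≤ ρ ^ k * ‖z - p‖ := by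
  have hlip : LipschitzWith ρ.toNNReal T :=
    LipschitzWith.of_dist_le' fun x y => by simpa only [dist_eq_norm] using hT x y
  have := (hlip.iterate k).dist_le_mul z p
  rwa [Function.iterate_fixed hp, dist_eq_norm, dist_eq_norm, NNReal.coe_pow,
    Real.coe_toNNReal _ hρ] at this

theorem limsup_le_div_of_le_mul_add {e : ℕ → ℝ} (he : ∀ k, 0 ≤ e k) {β c : ℝ} (hβ0 : 0 ≤ β)
    (hβ1 : β < 1) (hrec : ∀ k, e (k + 1) ≤ β * e k + c) :
    limsup e atTop ≤ c / (1 - β) := by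
  have h1β : 0 < 1 - β := by linarith
  have hbound : ∀ k, e k ≤ β ^ k * (e 0 - c / (1 - β)) + c / (1 - β) := by
    intro k
    induction k with
    | zero => simp
    | succ k ih =>
      calc e (k + 1) ≤ β * e k + c := hrec k
        _ ≤ β * (β ^ k * (e 0 - c / (1 - β)) + c / (1 - β)) + c := by gcongr
        _ = β ^ (k + 1) * (e 0 - c / (1 - β)) + c / (1 - β) := by field_simp; ring
  have hlim : Tendsto (fun k => β ^ k * (e 0 - c / (1 - β)) + c / (1 - β)) atTop
      (𝓝 (c / (1 - β))) := by
    simpa using ((tendsto_pow_atTop_nhds_zero_of_lt_one hβ0 hβ1).mul_const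
      (e 0 - c / (1 - β))).add_const (c / (1 - β))
  calc limsup e atTop
      ≤ limsup (fun k => β ^ k * (e 0 - c / (1 - β)) + c / (1 - β)) atTop :=
        limsup_le_limsup (Eventually.of_forall hbound) (isCoboundedUnder_le_of_le atTop he)
          hlim.isBoundedUnder_le
    _ = c / (1 - β) := hlim.limsup_eq

namespace TVOpt

variable {n : ℕ} (P : TVOpt n)

def predict (x : EuclideanSpace ℝ (Fin n)) (t h : ℝ) : EuclideanSpace ℝ (Fin n) :=
  x - h • P.hessInv x t (P.dtgrad x t)

def correct (γ t : ℝ) (y : EuclideanSpace ℝ (Fin n)) : EuclideanSpace ℝ (Fin n) :=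
  y - γ • P.grad y t

theorem C0_nonneg : 0 ≤ P.C0 := (norm_nonneg _).trans (P.dtgrad_bound 0 0)

theorem C1_nonneg : 0 ≤ P.C1 := (norm_nonneg (P.d3 0 0)).trans (P.d3_bound 0 0)

theorem C2_nonneg : 0 ≤ P.C2 := (norm_nonneg _).trans (P.dthess_bound 0 0)

theorem C3_nonneg : 0 ≤ P.C3 := (norm_nonneg _).trans (P.dttgrad_bound 0 0)

theorem hess_hessInv_apply (x : EuclideanSpace ℝ (Fin n)) (t : ℝ) (w : EuclideanSpace ℝ (Fin n)) :
    P.hess x t (P.hessInv x t w) = w :=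
  DFunLike.congr_fun (P.hessInv_right x t) w

theorem hessInv_hess_apply (x : EuclideanSpace ℝ (Fin n)) (t : ℝ) (w : EuclideanSpace ℝ (Fin n)) :
    P.hessInv x t (P.hess x t w) = w :=
  DFunLike.congr_fun (P.hessInv_left x t) w

theorem norm_hessInv_apply_le (x : EuclideanSpace ℝ (Fin n)) (t : ℝ)
    (w : EuclideanSpace ℝ (Fin n)) : ‖P.hessInv x t w‖ ≤ ‖w‖ / P.m := by
  rw [le_div_iff₀' P.m_pos]
  simpa only [hess_hessInv_apply] using
    mul_norm_le_norm_of_mul_sq_le_inner (P.strong_convex x t (P.hessInv x t w))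

theorem hess_isSymmetric (x : EuclideanSpace ℝ (Fin n)) (t : ℝ) :
    (P.hess x t : EuclideanSpace ℝ (Fin n) →ₗ[ℝ] EuclideanSpace ℝ (Fin n)).IsSymmetric :=
  fun v w => by
    have hf : ∀ z, HasFDerivAt (fun z => P.f z t) (innerSL ℝ (P.grad z t)) z :=
      fun z => (P.grad_spec z t).hasFDerivAt
    have hx : HasFDerivAt (fun z => innerSL ℝ (P.grad z t)) ((innerSL ℝ).comp (P.hess x t)) x :=
      (innerSL ℝ).hasFDerivAt.comp x (P.hess_spec x t)
    simpa [real_inner_comm] using second_derivative_symmetric hf hx v w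

theorem norm_hess_sub_hess_le_space (t : ℝ) (x y : EuclideanSpace ℝ (Fin n)) :
    ‖P.hess y t - P.hess x t‖ ≤ P.C1 * ‖y - x‖ :=
  norm_sub_le_of_forall_hasFDerivAt (fun z => P.d3_spec z t) (fun z => P.d3_bound z t) x y

theorem norm_hess_sub_hess_le_time (x : EuclideanSpace ℝ (Fin n)) (s t : ℝ) :
    ‖P.hess x s - P.hess x t‖ ≤ P.C2 * |s - t| :=
  norm_sub_le_of_forall_hasDerivAt (P.dthess_spec x) (P.dthess_bound x) s t

theorem norm_dtgrad_sub_dtgrad_le_time (x : EuclideanSpace ℝ (Fin n)) (s t : ℝ) :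
    ‖P.dtgrad x s - P.dtgrad x t‖ ≤ P.C3 * |s - t| :=
  norm_sub_le_of_forall_hasDerivAt (P.dttgrad_spec x) (P.dttgrad_bound x) s t

/-- The difference quotients in time of `∇ₓ f(y;·) - ∇ₓ f(x;·)` are bounded by the mean value
theorem in space. -/
theorem norm_dtgrad_sub_dtgrad_le_space (t : ℝ) (x y : EuclideanSpace ℝ (Fin n)) :
    ‖P.dtgrad y t - P.dtgrad x t‖ ≤ P.C2 * ‖y - x‖ := by
  have hquot : ∀ s, ‖(P.grad y s - P.grad x s) - (P.grad y t - P.grad x t)‖ ≤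
      P.C2 * ‖y - x‖ * ‖s - t‖ := fun s => calc
    _ = ‖(P.grad y s - P.grad y t) - (P.grad x s - P.grad x t)‖ := by congr 1; abel
    _ ≤ P.C2 * |s - t| * ‖y - x‖ :=
      norm_sub_le_of_forall_hasFDerivAt (fun z => (P.hess_spec z s).sub (P.hess_spec z t))
        (fun z => P.norm_hess_sub_hess_le_time z s t) x y
    _ = P.C2 * ‖y - x‖ * ‖s - t‖ := by rw [Real.norm_eq_abs]; ring
  exact ((P.dtgrad_spec y t).sub (P.dtgrad_spec x t)).le_of_lip'
    (mul_nonneg P.C2_nonneg (norm_nonneg _)) (Eventually.of_forall hquot)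

theorem norm_sub_xstar_le (y : EuclideanSpace ℝ (Fin n)) (t : ℝ) :
    ‖y - P.xstar t‖ ≤ ‖P.grad y t‖ / P.m := by
  rw [le_div_iff₀' P.m_pos]
  simpa [P.xstar_grad] using mul_norm_sub_le_norm_sub_of_hasFDerivAt
    (fun z => P.hess_spec z t) (P.strong_convex · t) (P.xstar t) y

theorem norm_correct_sub_correct_le (γ t : ℝ) (x y : EuclideanSpace ℝ (Fin n)) :
    ‖P.correct γ t x - P.correct γ t y‖ ≤ max |1 - γ * P.m| |1 - γ * P.L| * ‖x - y‖ :=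
  norm_sub_le_of_forall_hasFDerivAt
    (fun z => (hasFDerivAt_id z).sub ((P.hess_spec z t).const_smul γ))
    (fun z => norm_id_sub_smul_le (P.hess_isSymmetric z t) (P.strong_convex z t)
      (P.hess_bound z t) γ) y x

theorem norm_correct_iterate_sub_xstar_le (γ t : ℝ) (τ : ℕ) (z : EuclideanSpace ℝ (Fin n)) :
    ‖(P.correct γ t)^[τ] z - P.xstar t‖ ≤
      max |1 - γ * P.m| |1 - γ * P.L| ^ τ * ‖z - P.xstar t‖ :=
  norm_iterate_sub_le_of_isFixedPt ((abs_nonneg _).trans (le_max_left _ _))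
    (P.norm_correct_sub_correct_le γ t) (by simp [correct, P.xstar_grad]) τ z

theorem norm_hessInv_dtgrad_sub_le (t : ℝ) (x y : EuclideanSpace ℝ (Fin n)) :
    ‖P.hessInv y t (P.dtgrad y t) - P.hessInv x t (P.dtgrad x t)‖ ≤
      (P.C0 * P.C1 / P.m ^ 2 + P.C2 / P.m) * ‖y - x‖ := by
  have hm := P.m_pos
  set w := P.hessInv x t (P.dtgrad x t)
  have hw : ‖w‖ ≤ P.C0 / P.m := (P.norm_hessInv_apply_le x t _).trans
    (div_le_div_of_nonneg_right (P.dtgrad_bound x t) hm.le)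
  have hsplit : P.hessInv y t (P.dtgrad y t) - w =
      P.hessInv y t (P.dtgrad y t - P.dtgrad x t + (P.hess x t - P.hess y t) w) := by
    rw [map_add, map_sub, sub_apply, map_sub, P.hess_hessInv_apply, P.hessInv_hess_apply]
    abel
  have hhess : ‖(P.hess x t - P.hess y t) w‖ ≤ P.C1 * ‖y - x‖ * (P.C0 / P.m) := calc
    _ ≤ ‖P.hess x t - P.hess y t‖ * ‖w‖ := ContinuousLinearMap.le_opNorm _ _
    _ ≤ P.C1 * ‖y - x‖ * (P.C0 / P.m) := by
      rw [norm_sub_rev (P.hess x t)]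
      gcongr
      · exact mul_nonneg P.C1_nonneg (norm_nonneg _)
      · exact P.norm_hess_sub_hess_le_space t x y
  rw [hsplit]
  calc _ ≤ ‖P.dtgrad y t - P.dtgrad x t + (P.hess x t - P.hess y t) w‖ / P.m :=
        P.norm_hessInv_apply_le y t _
    _ ≤ (P.C2 * ‖y - x‖ + P.C1 * ‖y - x‖ * (P.C0 / P.m)) / P.m :=
        div_le_div_of_nonneg_right ((norm_add_le _ _).trans
          (add_le_add (P.norm_dtgrad_sub_dtgrad_le_space t x y) hhess)) hm.le
    _ = (P.C0 * P.C1 / P.m ^ 2 + P.C2 / P.m) * ‖y - x‖ := by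
        field_simp
        ring

theorem norm_predict_sub_predict_le {h : ℝ} (hh : 0 ≤ h) (t : ℝ)
    (x y : EuclideanSpace ℝ (Fin n)) :
    ‖P.predict y t h - P.predict x t h‖ ≤
      (1 + h * (P.C0 * P.C1 / P.m ^ 2 + P.C2 / P.m)) * ‖y - x‖ := calc
  _ = ‖(y - x) - h • (P.hessInv y t (P.dtgrad y t) - P.hessInv x t (P.dtgrad x t))‖ := by
      rw [predict, predict, smul_sub]
      congr 1
      abel
  _ ≤ ‖y - x‖ + ‖h • (P.hessInv y t (P.dtgrad y t) - P.hessInv x t (P.dtgrad x t))‖ :=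
      norm_sub_le _ _
  _ ≤ ‖y - x‖ + h * ((P.C0 * P.C1 / P.m ^ 2 + P.C2 / P.m) * ‖y - x‖) := by
      rw [norm_smul, Real.norm_of_nonneg hh]
      gcongr
      exact P.norm_hessInv_dtgrad_sub_le t x y
  _ = _ := by ring

theorem norm_grad_add_sub_sub_hess_le (t : ℝ) (a Δ : EuclideanSpace ℝ (Fin n)) :
    ‖P.grad (a + Δ) t - P.grad a t - P.hess a t Δ‖ ≤ P.C1 * ‖Δ‖ ^ 2 / 2 := by
  have hline : ∀ u : ℝ, HasDerivAt (fun u : ℝ => a + u • Δ) Δ u := fun u =>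
    (((hasDerivAt_id u).smul_const Δ).const_add a).congr_deriv (one_smul ℝ Δ)
  have hbound : ∀ u ∈ Icc (0 : ℝ) 1,
      ‖P.hess (a + u • Δ) t Δ - P.hess (a + (0 : ℝ) • Δ) t Δ‖ ≤ P.C1 * ‖Δ‖ ^ 2 * (u - 0) :=
    fun u hu => calc
      _ ≤ ‖P.hess (a + u • Δ) t - P.hess (a + (0 : ℝ) • Δ) t‖ * ‖Δ‖ := by
          rw [← sub_apply]; exact ContinuousLinearMap.le_opNorm _ _
      _ ≤ P.C1 * ‖u • Δ‖ * ‖Δ‖ := by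
          gcongr
          simpa using P.norm_hess_sub_hess_le_space t a (a + u • Δ)
      _ = P.C1 * ‖Δ‖ ^ 2 * (u - 0) := by rw [norm_smul, Real.norm_of_nonneg hu.1]; ring
  simpa using norm_sub_sub_smul_deriv_le
    (fun u => (P.hess_spec (a + u • Δ) t).comp_hasDerivAt u (hline u)) zero_le_one hbound

theorem norm_grad_add_time_sub_sub_dtgrad_le {h : ℝ} (hh : 0 ≤ h)
    (x : EuclideanSpace ℝ (Fin n)) (t : ℝ) :
    ‖P.grad x (t + h) - P.grad x t - h • P.dtgrad x t‖ ≤ P.C3 * h ^ 2 / 2 := by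
  simpa using norm_sub_sub_smul_deriv_le (P.dtgrad_spec x) (le_add_of_nonneg_right hh)
    fun s hs => by
      simpa [abs_of_nonneg (sub_nonneg.2 hs.1)] using P.norm_dtgrad_sub_dtgrad_le_time x s t

/-- The prediction is a Newton step on `∇ₓ f(a;t+h) ≈ ∇ₓ f(a;t) + h ∇_{tx} f(a;t)`, so the
first-order terms cancel and only the second-order remainders in `x`, in `t`, and the mixed one
are left. -/
theorem norm_grad_predict_le {h : ℝ} (hh : 0 ≤ h) (a : EuclideanSpace ℝ (Fin n)) (t : ℝ) :
    ‖P.grad (P.predict a t h) (t + h)‖ ≤ ‖P.grad a t‖ +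
      h ^ 2 / 2 * (P.C0 ^ 2 * P.C1 / P.m ^ 2 + 2 * P.C0 * P.C2 / P.m + P.C3) := by
  have hm := P.m_pos
  have hC1 := P.C1_nonneg
  have hC2 := P.C2_nonneg
  set Δ := -(h • P.hessInv a t (P.dtgrad a t))
  have hΔ : ‖Δ‖ ≤ h * (P.C0 / P.m) := by
    rw [norm_neg, norm_smul, Real.norm_of_nonneg hh]
    exact mul_le_mul_of_nonneg_left ((P.norm_hessInv_apply_le a t _).trans
      (div_le_div_of_nonneg_right (P.dtgrad_bound a t) hm.le)) hh
  have hnewton : P.hess a t Δ = -(h • P.dtgrad a t) := by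
    simp only [Δ, map_neg, map_smul, hess_hessInv_apply]
  have hmixed : ‖(P.hess a (t + h) - P.hess a t) Δ‖ ≤ P.C2 * h * ‖Δ‖ := calc
    _ ≤ ‖P.hess a (t + h) - P.hess a t‖ * ‖Δ‖ := ContinuousLinearMap.le_opNorm _ _
    _ ≤ P.C2 * h * ‖Δ‖ := by
        gcongr
        simpa [abs_of_nonneg hh] using P.norm_hess_sub_hess_le_time a (t + h) t
  have hsplit : P.grad (P.predict a t h) (t + h) =
      (P.grad (a + Δ) (t + h) - P.grad a (t + h) - P.hess a (t + h) Δ) +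
        (P.hess a (t + h) - P.hess a t) Δ +
        (P.grad a (t + h) - P.grad a t - h • P.dtgrad a t) + P.grad a t := by
    rw [predict, sub_eq_add_neg, sub_apply, hnewton]
    abel
  rw [hsplit]
  calc _ ≤ P.C1 * ‖Δ‖ ^ 2 / 2 + P.C2 * h * ‖Δ‖ + P.C3 * h ^ 2 / 2 + ‖P.grad a t‖ :=
        norm_add₄_le.trans (by gcongr; exacts [P.norm_grad_add_sub_sub_hess_le _ _ _,
          P.norm_grad_add_time_sub_sub_dtgrad_le hh a t])
    _ ≤ P.C1 * (h * (P.C0 / P.m)) ^ 2 / 2 + P.C2 * h * (h * (P.C0 / P.m)) + P.C3 * h ^ 2 / 2 +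
          ‖P.grad a t‖ := by
        gcongr
    _ = _ := by
        field_simp
        ring

theorem norm_predict_xstar_sub_xstar_le {h : ℝ} (hh : 0 ≤ h) (t : ℝ) :
    ‖P.predict (P.xstar t) t h - P.xstar (t + h)‖ ≤
      h ^ 2 / 2 * (P.C0 ^ 2 * P.C1 / P.m ^ 3 + 2 * P.C0 * P.C2 / P.m ^ 2 + P.C3 / P.m) := by
  have hm := P.m_pos
  calc _ ≤ ‖P.grad (P.predict (P.xstar t) t h) (t + h)‖ / P.m := P.norm_sub_xstar_le _ _
    _ ≤ h ^ 2 / 2 * (P.C0 ^ 2 * P.C1 / P.m ^ 2 + 2 * P.C0 * P.C2 / P.m + P.C3) / P.m := by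
        gcongr
        simpa [P.xstar_grad] using P.norm_grad_predict_le hh (P.xstar t) t
    _ = _ := by
        field_simp

theorem norm_gtt_step_sub_xstar_le {h : ℝ} (hh : 0 ≤ h) (γ : ℝ) (τ : ℕ)
    (x : EuclideanSpace ℝ (Fin n)) (t : ℝ) :
    ‖(P.correct γ (t + h))^[τ] (P.predict x t h) - P.xstar (t + h)‖ ≤
      max |1 - γ * P.m| |1 - γ * P.L| ^ τ *
        ((1 + h * (P.C0 * P.C1 / P.m ^ 2 + P.C2 / P.m)) * ‖x - P.xstar t‖ +
          h ^ 2 / 2 * (P.C0 ^ 2 * P.C1 / P.m ^ 3 + 2 * P.C0 * P.C2 / P.m ^ 2 + P.C3 / P.m)) := by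
  refine (P.norm_correct_iterate_sub_xstar_le γ (t + h) τ _).trans ?_
  have hρ : 0 ≤ max |1 - γ * P.m| |1 - γ * P.L| := (abs_nonneg _).trans (le_max_left _ _)
  gcongr
  exact (norm_sub_le_norm_sub_add_norm_sub _ (P.predict (P.xstar t) t h) _).trans
    (add_le_add (P.norm_predict_sub_predict_le hh t _ _) (P.norm_predict_xstar_sub_xstar_le hh t))

end TVOpt

theorem gtt_asymptotic_error_Oh2_general (n : ℕ) (P : TVOpt n) (h : ℝ) (hh : 0 < h)
    (γ : ℝ) (τ : ℕ)
    (ρ : ℝ) (hρ : ρ = max |1 - γ * P.m| |1 - γ * P.L|)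
    (σ : ℝ) (hσ : σ = 1 + h * (P.C0 * P.C1 / P.m ^ 2 + P.C2 / P.m))
    (hsmall : ρ ^ τ * σ < 1)
    (x : ℕ → EuclideanSpace ℝ (Fin n))
    (hrec : ∀ k : ℕ, x (k + 1) =
      (fun y => y - γ • P.grad y (((k : ℝ) + 1) * h))^[τ]
        (x k - h • P.hessInv (x k) ((k : ℝ) * h) (P.dtgrad (x k) ((k : ℝ) * h)))) :
    Filter.limsup (fun k : ℕ => ‖x k - P.xstar ((k : ℝ) * h)‖) Filter.atTop ≤
      ρ ^ τ * h ^ 2 / (2 * (1 - ρ ^ τ * σ)) *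
        (P.C0 ^ 2 * P.C1 / P.m ^ 3 + 2 * P.C0 * P.C2 / P.m ^ 2 + P.C3 / P.m) := by
  set K := P.C0 ^ 2 * P.C1 / P.m ^ 3 + 2 * P.C0 * P.C2 / P.m ^ 2 + P.C3 / P.m
  have hρ0 : 0 ≤ ρ := hρ ▸ (abs_nonneg _).trans (le_max_left _ _)
  have hσ0 : 0 ≤ σ := by
    have := P.m_pos; have := P.C0_nonneg; have := P.C1_nonneg; have := P.C2_nonneg
    rw [hσ]; positivity
  have hstep : ∀ k : ℕ, ‖x (k + 1) - P.xstar ((k + 1 : ℕ) * h)‖ ≤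
      ρ ^ τ * σ * ‖x k - P.xstar (k * h)‖ + ρ ^ τ * (h ^ 2 / 2 * K) := fun k => by
    have hk : ((k : ℝ) + 1) * h = k * h + h := by ring
    rw [Nat.cast_succ, hrec k, hk]
    have := P.norm_gtt_step_sub_xstar_le hh.le γ τ (x k) (k * h)
    rw [← hρ, ← hσ] at this
    exact this.trans_eq (by ring)
  refine (limsup_le_div_of_le_mul_add (fun k => norm_nonneg _) (by positivity) hsmall
    hstep).trans_eq ?_
  have : 0 < 1 - ρ ^ τ * σ := by linarith
  field_simp

/-- **Corollary 1, part b.** If `ρ^τ·σ < 1`, the GTT iterates have an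
asymptotic tracking error of order `O(h²)`. -/
theorem gtt_asymptotic_error_Oh2 (n : ℕ) (P : TVOpt n) (h : ℝ) (hh : 0 < h)
    (γ : ℝ) (τ : ℕ) (hτ : 1 ≤ τ) (hγ0 : 0 < γ) (hγL : γ < 2 / P.L)
    (ρ : ℝ) (hρ : ρ = max |1 - γ * P.m| |1 - γ * P.L|)
    (σ : ℝ) (hσ : σ = 1 + h * (P.C0 * P.C1 / P.m ^ 2 + P.C2 / P.m))
    (hsmall : ρ ^ τ * σ < 1)
    (x : ℕ → EuclideanSpace ℝ (Fin n))
    (hrec : ∀ k : ℕ, x (k + 1) =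
      (fun y => y - γ • P.grad y (((k : ℝ) + 1) * h))^[τ]
        (x k - h • P.hessInv (x k) ((k : ℝ) * h) (P.dtgrad (x k) ((k : ℝ) * h)))) :
    Filter.limsup (fun k : ℕ => ‖x k - P.xstar ((k : ℝ) * h)‖) Filter.atTop ≤
      ρ ^ τ * h ^ 2 / (2 * (1 - ρ ^ τ * σ)) *
        (P.C0 ^ 2 * P.C1 / P.m ^ 3 + 2 * P.C0 * P.C2 / P.m ^ 2 + P.C3 / P.m) :=
  gtt_asymptotic_error_Oh2_general n P h hh γ τ ρ hρ σ hσ hsmall x hrec
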